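/- arXiv:1512.01382 — 2 statements merged into one kernel-verified Lean document; each statement's English description precedes it below -/
import Mathlib

section
/- If b̃ minimizes b ↦ max_{1≤i≤n}(Y_i − (x_i − x̄)ᵀ b) over ℝ^p, and one sets β̃_0 = max_i (Y_i − x_iᵀ b̃), then the pair (β̃_0, b̃) is feasible (Y_i ≤ β̃_0 + x_iᵀ b̃ for all i) and attains the optimum of the linear program: β̃_0 + x̄ᵀ b̃ = inf{b_0 + x̄ᵀ b : Y_i ≤ b_0 + x_iᵀ b for all i}. -/
/-!
For every slope vector `b` the smallest feasible intercept is the maximal residual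
`max_i (Y i - x iᵀ b)`, so the linear program amounts to minimising `b ↦ max_i (Y i - x iᵀ b) + x̄ᵀ b`
over `b`. Centering the regressors shifts every residual by the same amount `x̄ᵀ b`, so this
objective is exactly Jaeckel's extreme-score dispersion, which `b̃` minimises.
-/

open Finset

namespace Finset

variable {ι α : Type*} [LinearOrder α] [AddCommGroup α] [IsOrderedAddMonoid α]
  {s : Finset ι} (H : s.Nonempty)

lemma le_sup'_sub_add (f g : ι → α) {i : ι} (hi : i ∈ s) :
    f i ≤ s.sup' H (fun i => f i - g i) + g i :=
  sub_le_iff_le_add.mp (le_sup' (fun i => f i - g i) hi)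

lemma sup'_sub_le_of_forall_le_add {f g : ι → α} {a : α} (h : ∀ i ∈ s, f i ≤ a + g i) :
    s.sup' H (fun i => f i - g i) ≤ a :=
  sup'_le H _ fun i hi => sub_le_iff_le_add.mpr (h i hi)

end Finset

section ExtremeRegressionQuantile

variable {ι β : Type*} [Fintype ι] (H : (univ : Finset ι).Nonempty)

lemma isLeast_lp_value_of_minimizer (Y : ι → ℝ) (r : β → ι → ℝ) (c : β → ℝ) {btilde : β}
    (hmin : ∀ b, univ.sup' H (fun i => Y i - r btilde i) + c btilde ≤
      univ.sup' H (fun i => Y i - r b i) + c b) :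
    IsLeast {v : ℝ | ∃ (b0 : ℝ) (b : β), (∀ i, Y i ≤ b0 + r b i) ∧ v = b0 + c b}
      (univ.sup' H (fun i => Y i - r btilde i) + c btilde) := by
  refine ⟨⟨_, btilde, fun i => le_sup'_sub_add H Y _ (mem_univ i), rfl⟩, ?_⟩
  rintro v ⟨b0, b, hfeas, rfl⟩
  have hb0 : univ.sup' H (fun i => Y i - r b i) ≤ b0 :=
    sup'_sub_le_of_forall_le_add H fun i _ => hfeas i
  linarith [hmin b]

lemma sup'_sub_centered_eq {κ : Type*} [Fintype κ] (Y : ι → ℝ) (x : ι → κ → ℝ)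
    (xbar b : κ → ℝ) :
    univ.sup' H (fun i => Y i - ∑ j, (x i j - xbar j) * b j) =
      univ.sup' H (fun i => Y i - ∑ j, x i j * b j) + ∑ j, xbar j * b j := by
  rw [sup'_add]
  refine sup'_congr H rfl fun i _ => ?_
  simp only [sub_mul, sum_sub_distrib]
  ring

end ExtremeRegressionQuantile

theorem r_estimator_solves_lp {n p : ℕ} (hn : 0 < n)
    (Y : Fin n → ℝ) (x : Fin n → Fin p → ℝ) (btilde : Fin p → ℝ)
    (hmin : ∀ b : Fin p → ℝ,
      Finset.univ.sup' (Finset.univ_nonempty_iff.mpr ⟨⟨0, hn⟩⟩)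
          (fun i => Y i - ∑ j, (x i j - (1 / n : ℝ) * ∑ k, x k j) * btilde j) ≤
        Finset.univ.sup' (Finset.univ_nonempty_iff.mpr ⟨⟨0, hn⟩⟩)
          (fun i => Y i - ∑ j, (x i j - (1 / n : ℝ) * ∑ k, x k j) * b j)) :
    (∀ i, Y i ≤
        (Finset.univ.sup' (Finset.univ_nonempty_iff.mpr ⟨⟨0, hn⟩⟩)
          (fun i' => Y i' - ∑ j, x i' j * btilde j)) + ∑ j, x i j * btilde j) ∧
    (Finset.univ.sup' (Finset.univ_nonempty_iff.mpr ⟨⟨0, hn⟩⟩)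
          (fun i => Y i - ∑ j, x i j * btilde j))
        + ∑ j, ((1 / n : ℝ) * ∑ k, x k j) * btilde j =
      sInf {v : ℝ | ∃ (b0 : ℝ) (b : Fin p → ℝ),
        (∀ i, Y i ≤ b0 + ∑ j, x i j * b j) ∧
        v = b0 + ∑ j, ((1 / n : ℝ) * ∑ k, x k j) * b j} := by
  have H : (univ : Finset (Fin n)).Nonempty := univ_nonempty_iff.mpr ⟨⟨0, hn⟩⟩
  have hlp := isLeast_lp_value_of_minimizer H Y (fun b i => ∑ j, x i j * b j)
    (fun b => ∑ j, ((1 / n : ℝ) * ∑ k, x k j) * b j) (btilde := btilde) fun b => by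
      simpa only [sup'_sub_centered_eq] using hmin b
  exact ⟨fun i => le_sup'_sub_add H Y _ (mem_univ i), hlp.csInf_eq.symm⟩
end

section
/- The function b ↦ max_{1≤i≤n}(Y_i − (x_i − x̄)ᵀ b) attains its infimum on ℝ^p; that is, there exists b̃ ∈ ℝ^p with max_i(Y_i − (x_i − x̄)ᵀ b̃) = inf_{b ∈ ℝ^p} max_i(Y_i − (x_i − x̄)ᵀ b). -/
/-!
The centred regressors sum to zero, so every fitted vector `v = (cᵢᵀ b)ᵢ` lies in the zero-sum
hyperplane, where `maxᵢ (-vᵢ) ≥ ‖v‖∞ / n`. Hence `v ↦ maxᵢ (Yᵢ - vᵢ)` is continuous and coercive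
on the finite-dimensional range of `b ↦ (cᵢᵀ b)ᵢ`, so it attains its minimum there, and any
preimage of a minimiser is a minimiser in `b`.
-/

open Finset Filter Matrix

theorem sum_sub_average_eq_zero {ι : Type*} [Fintype ι] [Nonempty ι] (f : ι → ℝ) :
    ∑ i, (f i - (1 / Fintype.card ι : ℝ) * ∑ k, f k) = 0 := by
  have hcard : (Fintype.card ι : ℝ) ≠ 0 := Nat.cast_ne_zero.mpr Fintype.card_ne_zero
  rw [sum_sub_distrib, sum_const, card_univ, nsmul_eq_mul]
  field_simp
  ring

theorem Matrix.sum_mulVec_eq_zero_of_sum_col_eq_zero {m k R : Type*} [Fintype m] [Fintype k]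
    [CommSemiring R] (C : Matrix m k R) (hC : ∀ j, ∑ i, C i j = 0) (b : k → R) :
    ∑ i, (C *ᵥ b) i = 0 := by
  simp only [mulVec, dotProduct]
  rw [sum_comm]
  simp [← sum_mul, hC]

theorem norm_le_card_mul_sup'_of_sum_eq_zero {ι : Type*} [Fintype ι] [Nonempty ι]
    (w : ι → ℝ) (hw : ∑ i, w i = 0) : ‖w‖ ≤ Fintype.card ι * univ.sup' univ_nonempty w := by
  set M := univ.sup' univ_nonempty w
  have hcard : (1 : ℝ) ≤ Fintype.card ι := by exact_mod_cast Fintype.card_pos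
  have hle : ∀ i, w i ≤ M := fun i => le_sup' w (mem_univ i)
  have hM : 0 ≤ M := by
    have := sum_le_card_nsmul univ w M fun i _ => hle i
    rw [hw, card_univ, nsmul_eq_mul] at this
    exact nonneg_of_mul_nonneg_right this (by positivity)
  -- `∑ k, (M - w k) = card • M` and every summand is nonnegative.
  have hgap : ∀ i, M - w i ≤ Fintype.card ι * M := fun i => by
    have := single_le_sum (f := fun k => M - w k) (fun k _ => sub_nonneg.mpr (hle k)) (mem_univ i)
    simpa [sum_sub_distrib, hw] using this
  refine (pi_norm_le_iff_of_nonneg (by positivity)).mpr fun i => abs_le.mpr ⟨?_, ?_⟩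
  · linarith [hgap i]
  · nlinarith [hle i]

theorem inf'_add_norm_div_card_le_sup'_sub {ι : Type*} [Fintype ι] [Nonempty ι]
    (Y v : ι → ℝ) (hv : ∑ i, v i = 0) :
    univ.inf' univ_nonempty Y + ‖v‖ / Fintype.card ι ≤
      univ.sup' univ_nonempty (fun i => Y i - v i) := by
  have hnorm := norm_le_card_mul_sup'_of_sum_eq_zero (-v) (by simp [hv])
  obtain ⟨i₀, -, hi₀⟩ := exists_mem_eq_sup' univ_nonempty (-v)
  rw [norm_neg, hi₀, ← div_le_iff₀' (by positivity)] at hnorm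
  calc univ.inf' univ_nonempty Y + ‖v‖ / Fintype.card ι ≤ Y i₀ + -v i₀ :=
        add_le_add (inf'_le Y (mem_univ i₀)) hnorm
    _ ≤ univ.sup' univ_nonempty (fun i => Y i - v i) :=
        le_sup'_of_le _ (mem_univ i₀) (by simp [sub_eq_add_neg])

theorem LinearMap.exists_forall_le_comp_of_coercive_on_range {E F : Type*} [AddCommGroup E]
    [Module ℝ E] [NormedAddCommGroup F] [NormedSpace ℝ F] [FiniteDimensional ℝ F]
    (L : E →ₗ[ℝ] F) {f : F → ℝ} (hf : Continuous f) {a c : ℝ} (hc : 0 < c)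
    (hcoer : ∀ v ∈ LinearMap.range L, a + ‖v‖ / c ≤ f v) :
    ∃ b₀, ∀ b, f (L b₀) ≤ f (L b) := by
  have htend : Tendsto (fun v : LinearMap.range L => f v) (cocompact _) atTop :=
    tendsto_atTop_mono (fun v => hcoer v v.2)
      (tendsto_atTop_add_const_left _ a (tendsto_norm_cocompact_atTop.atTop_div_const hc))
  obtain ⟨⟨_, b₀, rfl⟩, hmin⟩ := (hf.comp continuous_subtype_val).exists_forall_le htend
  exact ⟨b₀, fun b => hmin ⟨L b, b, rfl⟩⟩

theorem max_centered_residual_attains_inf {n p : ℕ} (hn : 0 < n)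
    (Y : Fin n → ℝ) (x : Fin n → Fin p → ℝ) :
    ∃ btilde : Fin p → ℝ,
      Finset.univ.sup' (Finset.univ_nonempty_iff.mpr ⟨⟨0, hn⟩⟩)
          (fun i => Y i - ∑ j, (x i j - (1 / n : ℝ) * ∑ k, x k j) * btilde j) =
        ⨅ b : Fin p → ℝ,
          Finset.univ.sup' (Finset.univ_nonempty_iff.mpr ⟨⟨0, hn⟩⟩)
            (fun i => Y i - ∑ j, (x i j - (1 / n : ℝ) * ∑ k, x k j) * b j) := by
  have : Nonempty (Fin n) := ⟨⟨0, hn⟩⟩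
  let C : Matrix (Fin n) (Fin p) ℝ := of fun i j => x i j - (1 / n : ℝ) * ∑ k, x k j
  have hC (j : Fin p) : ∑ i, C i j = 0 := by
    simpa only [C, of_apply, Fintype.card_fin] using sum_sub_average_eq_zero (x · j)
  let F : (Fin n → ℝ) → ℝ := fun v => univ.sup' univ_nonempty fun i => Y i - v i
  have hF : Continuous F :=
    Continuous.finset_sup'_apply _ fun i _ => continuous_const.sub (continuous_apply i)
  obtain ⟨b₀, hb₀⟩ := C.mulVecLin.exists_forall_le_comp_of_coercive_on_range hF
    (Nat.cast_pos.mpr hn) (a := univ.inf' univ_nonempty Y) <| by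
      rintro _ ⟨b, rfl⟩
      have := inf'_add_norm_div_card_le_sup'_sub Y _ (C.sum_mulVec_eq_zero_of_sum_col_eq_zero hC b)
      rwa [Fintype.card_fin] at this
  exact ⟨b₀, (ciInf_eq_of_forall_ge_of_forall_gt_exists_lt hb₀ fun _ hw => ⟨b₀, hw⟩).symm⟩
end
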